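/- arXiv:1803.11423 — 8 statements merged into one kernel-verified Lean document; each statement's English description precedes it below -/
import Mathlib

section
/- For every tree T with at least 2 vertices, the set L of leaves of T is a strong geodetic set, and moreover for any single leaf u ∈ L, the shortest paths from u to the other leaves already cover all vertices of T (i.e., every vertex of T lies on the unique path from u to some leaf). In particular sgc(T) = 1. -/
open SimpleGraph

/-- A choice of one fixed shortest path (geodesic) between each pair of vertices,
symmetric in the sense that the path from `v` to `u` is the reverse of the one
from `u` to `v`. -/
def StrongGeodeticChoice {V : Type*} (G : SimpleGraph V) (p : ∀ u v : V, G.Walk u v) : Prop :=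
  ∀ u v : V, (p u v).IsPath ∧ (p u v).length = G.dist u v ∧ p v u = (p u v).reverse

/-- `S` is a strong geodetic set of `G`: one can fix one shortest path between each
pair of vertices of `S` so that every vertex of `G` lies on some fixed path. -/
def IsStrongGeodeticSet {V : Type*} (G : SimpleGraph V) (S : Set V) : Prop :=
  ∃ p : ∀ u v : V, G.Walk u v, StrongGeodeticChoice G p ∧
    ∀ w : V, ∃ u ∈ S, ∃ v ∈ S, w ∈ (p u v).support

/-- The strong geodetic number of `G`. -/
noncomputable def sg {V : Type*} (G : SimpleGraph V) : ℕ :=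
  sInf {n | ∃ S : Set V, S.ncard = n ∧ IsStrongGeodeticSet G S}

/-- The strong geodetic core number of `G`: the minimum, over minimum strong
geodetic sets `S` together with a choice of fixed geodesics witnessing them,
of the size of a subset `X ⊆ S` such that the fixed paths with an endpoint in `X`
already cover all vertices. -/
noncomputable def sgc {V : Type*} (G : SimpleGraph V) : ℕ :=
  sInf {k | ∃ (S X : Set V) (p : ∀ u v : V, G.Walk u v),
    StrongGeodeticChoice G p ∧ S.ncard = sg G ∧
    (∀ w : V, ∃ u ∈ S, ∃ v ∈ S, w ∈ (p u v).support) ∧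
    X ⊆ S ∧ X.ncard = k ∧
    (∀ w : V, ∃ u ∈ X, ∃ v ∈ S, w ∈ (p u v).support)}

/-- `A` is a geodetic set: every vertex lies on some shortest path between two
vertices of `A`. -/
def IsGeodeticSet {V : Type*} (G : SimpleGraph V) (A : Set V) : Prop :=
  ∀ w : V, ∃ u ∈ A, ∃ v ∈ A, ∃ q : G.Walk u v, q.length = G.dist u v ∧ w ∈ q.support

/-- The geodetic number of `G`. -/
noncomputable def geodeticNumber {V : Type*} (G : SimpleGraph V) : ℕ :=
  sInf {n | ∃ A : Set V, A.ncard = n ∧ IsGeodeticSet G A}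

/-!
A vertex `w` of a tree lies on the path from `u` to a vertex `v` chosen as far from `u` as
possible subject to this; every neighbour of `v` is then on that path, hence is its penultimate
vertex, so `v` is a leaf. Thus the paths from one leaf to the leaves cover the tree. Conversely,
a leaf can only be an endpoint of a path, so every strong geodetic set contains all leaves and
the leaves form a minimum one.
-/

namespace SimpleGraph

variable {V : Type*} {G : SimpleGraph V}

theorem Walk.IsPath.two_le_degree_of_mem_support {u v w : V} [Fintype (G.neighborSet w)]
    {p : G.Walk u v} (hp : p.IsPath) (hw : w ∈ p.support) (hwu : w ≠ u) (hwv : w ≠ v) :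
    2 ≤ G.degree w := by
  obtain ⟨q, r, -, -, rfl⟩ := hp.mem_support_iff_exists_append.mp hw
  have hq : ¬q.Nil := fun h => hwu h.eq.symm
  have hr : ¬r.Nil := fun h => hwv h.eq
  have hne : q.penultimate ≠ r.snd :=
    hp.ne_of_mem_support_of_append (r.adj_snd hr).ne' (q.getVert_mem_support _)
      (r.getVert_mem_support _)
  rw [← card_neighborFinset_eq_degree, Nat.succ_le_iff, Finset.one_lt_card]
  exact ⟨_, (mem_neighborFinset _ _ _).mpr (q.adj_penultimate hq).symm, _,
    (mem_neighborFinset _ _ _).mpr (r.adj_snd hr), hne⟩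

theorem IsAcyclic.length_eq_dist_of_isPath (hG : G.IsAcyclic) {u v : V} {p : G.Walk u v}
    (hp : p.IsPath) : p.length = G.dist u v := by
  obtain ⟨q, hq, hql⟩ := p.reachable.exists_path_of_dist
  rwa [Subtype.mk.inj <| (hG.subsingleton_path u v).elim ⟨p, hp⟩ ⟨q, hq⟩]

namespace IsTree

noncomputable def path (hG : G.IsTree) (u v : V) : G.Walk u v :=
  (hG.existsUnique_path u v).exists.choose

theorem isPath_path (hG : G.IsTree) (u v : V) : (hG.path u v).IsPath :=
  (hG.existsUnique_path u v).exists.choose_spec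

theorem eq_path_of_isPath (hG : G.IsTree) {u v : V} {p : G.Walk u v} (hp : p.IsPath) :
    p = hG.path u v :=
  (hG.existsUnique_path u v).unique hp (hG.isPath_path u v)

theorem length_path (hG : G.IsTree) (u v : V) : (hG.path u v).length = G.dist u v :=
  hG.isAcyclic.length_eq_dist_of_isPath (hG.isPath_path u v)

theorem path_swap (hG : G.IsTree) (u v : V) : hG.path v u = (hG.path u v).reverse :=
  (hG.eq_path_of_isPath (hG.isPath_path u v).reverse).symm

theorem strongGeodeticChoice_path (hG : G.IsTree) : StrongGeodeticChoice G hG.path :=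
  fun u v => ⟨hG.isPath_path u v, hG.length_path u v, hG.path_swap u v⟩

theorem exists_degree_eq_one_mem_support_path [Fintype V] [DecidableRel G.Adj] [Nontrivial V]
    (hG : G.IsTree) (u w : V) : ∃ v, G.degree v = 1 ∧ w ∈ (hG.path u v).support := by
  classical
  obtain ⟨v, hwv, hmax⟩ := Finset.exists_max_image
    {v | w ∈ (hG.path u v).support} (G.dist u) ⟨w, by simp⟩
  simp only [Finset.mem_filter, Finset.mem_univ, true_and] at hwv hmax
  have hnbr : ∀ x, G.Adj v x → x ∈ (hG.path u v).support := by
    intro x hvx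
    by_contra hx
    have hpath := (hG.isPath_path u v).concat hx hvx
    have hdist : G.dist u x = G.dist u v + 1 := by
      rw [← hG.isAcyclic.length_eq_dist_of_isPath hpath, Walk.length_concat, hG.length_path]
    have := hmax x (hG.eq_path_of_isPath hpath ▸ Walk.support_subset_support_concat _ _ hwv)
    omega
  obtain ⟨x, hvx⟩ := hG.connected.preconnected.exists_adj_of_nontrivial v
  refine ⟨v, degree_eq_one_iff_existsUnique_adj.mpr ⟨x, hvx, fun y hvy => ?_⟩, hwv⟩
  rw [hG.isAcyclic.eq_penultimate_of_adj_end (hG.isPath_path u v) hvy (hnbr y hvy),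
    hG.isAcyclic.eq_penultimate_of_adj_end (hG.isPath_path u v) hvx (hnbr x hvx)]

end IsTree

end SimpleGraph

section StrongGeodetic

variable {V : Type*} {G : SimpleGraph V}

theorem IsStrongGeodeticSet.setOf_degree_eq_one_subset [G.LocallyFinite] {S : Set V}
    (hS : IsStrongGeodeticSet G S) : {v | G.degree v = 1} ⊆ S := by
  obtain ⟨p, hp, hcov⟩ := hS
  intro w (hw : G.degree w = 1)
  obtain ⟨a, ha, b, hb, hwp⟩ := hcov w
  by_contra hwS
  have := (hp a b).1.two_le_degree_of_mem_support hwp (ne_of_mem_of_not_mem ha hwS).symm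
    (ne_of_mem_of_not_mem hb hwS).symm
  omega

theorem sg_eq_ncard_of_subset [Finite V] {S : Set V} (hS : IsStrongGeodeticSet G S)
    (hmin : ∀ S', IsStrongGeodeticSet G S' → S ⊆ S') : sg G = S.ncard :=
  le_antisymm (Nat.sInf_le ⟨S, rfl, hS⟩) <| le_csInf ⟨_, S, rfl, hS⟩ <| by
    rintro _ ⟨S', rfl, hS'⟩
    exact Set.ncard_le_ncard (hmin S' hS')

theorem sgc_eq_one [Finite V] [Nonempty V] {p : ∀ u v : V, G.Walk u v}
    (hp : StrongGeodeticChoice G p) {S : Set V} (hS : S.ncard = sg G) {u : V} (hu : u ∈ S)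
    (hcov : ∀ w, ∃ v ∈ S, w ∈ (p u v).support) : sgc G = 1 := by
  refine le_antisymm (Nat.sInf_le ?one_mem) (le_csInf ⟨1, ?one_mem⟩ ?_)
  case one_mem =>
    exact ⟨S, {u}, p, hp, hS, fun w => ⟨u, hu, hcov w⟩, Set.singleton_subset_iff.mpr hu,
      Set.ncard_singleton u, fun w => ⟨u, rfl, hcov w⟩⟩
  rintro _ ⟨_, X, _, -, -, -, -, rfl, hXcov⟩
  obtain ⟨x, hx, -⟩ := hXcov (Classical.arbitrary V)
  exact Nat.one_le_iff_ne_zero.mpr (Set.ncard_ne_zero_of_mem hx)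

end StrongGeodetic

theorem stmt1 {V : Type*} [Fintype V] (T : SimpleGraph V) [DecidableRel T.Adj]
    (hT : T.IsTree) (h2 : 2 ≤ Fintype.card V) :
    IsStrongGeodeticSet T {v | T.degree v = 1} ∧
    (∀ u : V, T.degree u = 1 → ∀ w : V, ∃ v : V, T.degree v = 1 ∧
      ∃ q : T.Walk u v, q.IsPath ∧ q.length = T.dist u v ∧ w ∈ q.support) ∧
    sgc T = 1 := by
  have : Nontrivial V := Fintype.one_lt_card_iff_nontrivial.mp h2
  obtain ⟨u₀, hu₀⟩ := hT.exists_vert_degree_one_of_nontrivial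
  have hleaves : IsStrongGeodeticSet T {v | T.degree v = 1} :=
    ⟨hT.path, hT.strongGeodeticChoice_path, fun w =>
      ⟨u₀, hu₀, hT.exists_degree_eq_one_mem_support_path u₀ w⟩⟩
  refine ⟨hleaves, fun u _ w => ?_, ?_⟩
  · obtain ⟨v, hv, hw⟩ := hT.exists_degree_eq_one_mem_support_path u w
    exact ⟨v, hv, hT.path u v, hT.isPath_path u v, hT.length_path u v, hw⟩
  · exact sgc_eq_one hT.strongGeodeticChoice_path
      (sg_eq_ncard_of_subset hleaves fun _ hS => hS.setOf_degree_eq_one_subset).symm hu₀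
      (hT.exists_degree_eq_one_mem_support_path u₀)
end

section
/- For every graph G that is not complete, sgc(G) ≤ sg(G) − 1. -/
open SimpleGraph

/-!
Let `S` be a minimum strong geodetic set with its fixed geodesics `p` (if there is none, then
`sgc G = sInf ∅ = 0`), and `x ∈ S`. The paths of `p` with an endpoint in `S \ {x}` still cover
every vertex: a path between `x` and `v ≠ x` is the reverse of the path from `v` to `x`, and the
trivial path from `x` to itself is covered by the path from any other `y ∈ S` to `x`. Such a `y`
exists because `G`, not being complete, has two distinct vertices, which cannot both lie on the
trivial path at `x`. Hence `S \ {x}` is a strong geodetic core of size `sg G - 1`.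
-/

theorem Nat.sInf_le_of_nonempty_imp_mem {s : Set ℕ} {m : ℕ} (h : s.Nonempty → m ∈ s) :
    sInf s ≤ m :=
  s.eq_empty_or_nonempty.elim (fun hs => by simp [hs]) (fun hs => Nat.sInf_le (h hs))

namespace StrongGeodeticChoice

variable {V : Type*} {G : SimpleGraph V} {p : ∀ u v : V, G.Walk u v}

theorem mem_support_self_iff (hp : StrongGeodeticChoice G p) {x w : V} :
    w ∈ (p x x).support ↔ w = x := by
  have hnil : (p x x).Nil := Walk.length_eq_zero_iff.mp ((hp x x).2.1.trans dist_self)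
  rw [hnil.eq_nil, Walk.mem_support_nil_iff]

theorem mem_support_comm (hp : StrongGeodeticChoice G p) {u v w : V} :
    w ∈ (p v u).support ↔ w ∈ (p u v).support := by
  rw [(hp u v).2.2, Walk.support_reverse, List.mem_reverse]

theorem exists_mem_ne_of_covers (hp : StrongGeodeticChoice G p) {S : Set V}
    (hcover : ∀ w : V, ∃ u ∈ S, ∃ v ∈ S, w ∈ (p u v).support) {a b : V} (hab : a ≠ b)
    (x : V) : ∃ y ∈ S, y ≠ x := by
  by_contra! hS
  have on_self (w : V) : w = x := by
    obtain ⟨u, hu, v, hv, hw⟩ := hcover w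
    rw [hS u hu, hS v hv, hp.mem_support_self_iff] at hw
    exact hw
  exact hab ((on_self a).trans (on_self b).symm)

theorem covers_of_sdiff_singleton (hp : StrongGeodeticChoice G p) {S : Set V}
    (hcover : ∀ w : V, ∃ u ∈ S, ∃ v ∈ S, w ∈ (p u v).support) {x y : V} (hx : x ∈ S)
    (hy : y ∈ S) (hyx : y ≠ x) (w : V) : ∃ u ∈ S \ {x}, ∃ v ∈ S, w ∈ (p u v).support := by
  obtain ⟨u, hu, v, hv, hw⟩ := hcover w
  by_cases hux : u = x
  · subst hux
    by_cases hvu : v = u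
    · subst hvu
      rw [hp.mem_support_self_iff.mp hw]
      exact ⟨y, ⟨hy, hyx⟩, v, hx, Walk.end_mem_support _⟩
    · exact ⟨v, ⟨hv, hvu⟩, u, hu, hp.mem_support_comm.mpr hw⟩
  · exact ⟨u, ⟨hu, hux⟩, v, hv, hw⟩

end StrongGeodeticChoice

theorem stmt2_general {V : Type*} (G : SimpleGraph V)
    (hnc : ¬ ∀ u v : V, u ≠ v → G.Adj u v) :
    sgc G ≤ sg G - 1 := by
  push Not at hnc
  obtain ⟨a, b, hab, -⟩ := hnc
  refine Nat.sInf_le_of_nonempty_imp_mem fun ⟨_, S, _, p, hp, hS, hcover, _⟩ => ?_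
  obtain ⟨x, hx, -⟩ := hcover a
  obtain ⟨y, hy, hyx⟩ := hp.exists_mem_ne_of_covers hcover hab x
  exact ⟨S, S \ {x}, p, hp, hS, hcover, Set.sdiff_subset,
    by rw [Set.ncard_sdiff_singleton_of_mem hx, hS], hp.covers_of_sdiff_singleton hcover hx hy hyx⟩

theorem stmt2 {V : Type*} [Fintype V] (G : SimpleGraph V) (hG : G.Connected)
    (hnc : ¬ ∀ u v : V, u ≠ v → G.Adj u v) :
    sgc G ≤ sg G - 1 :=
  stmt2_general G hnc
end

section
/- For every non-complete connected graph G, sgc(G) ≤ n(G) − sg(G), where n(G) is the order of G. -/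
open SimpleGraph

/-!
Fix a minimum strong geodetic set `S` with its geodesics and an inclusion-minimal `X ⊆ S` whose
paths still cover `V`. By minimality every `x ∈ X` has a private vertex, covered only by paths
starting at `x`, so distinct elements of `X` have distinct private vertices. When `|X| ≥ 2` no
private vertex lies in `S`, because a vertex `w ∈ S` lies on the path from any `y ∈ X` to `w`;
hence `|X| ≤ n - |S|`. When `|X| ≤ 1` it suffices that `S ≠ V`: the second vertex of a geodesic
between two nonadjacent vertices is interior to it, so all other vertices form a strong geodetic
set and `sg G < n`.
-/

namespace SimpleGraph

variable {V : Type*} {G : SimpleGraph V}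

def PathsCover (p : ∀ u v : V, G.Walk u v) (X S : Set V) : Prop :=
  ∀ w : V, ∃ u ∈ X, ∃ v ∈ S, w ∈ (p u v).support

theorem Connected.exists_strongGeodeticChoice (hG : G.Connected) :
    ∃ p : ∀ u v : V, G.Walk u v, StrongGeodeticChoice G p := by
  choose q hq using hG.exists_path_of_dist
  have hq_nil (u : V) : q u u = .nil :=
    (Walk.length_eq_zero_iff.1 (by rw [(hq u u).2, dist_self])).eq_nil
  let : LinearOrder V := IsWellOrder.linearOrder WellOrderingRel
  refine ⟨fun u v => if u ≤ v then q u v else (q v u).reverse, fun u v => ?_⟩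
  rcases lt_trichotomy u v with h | rfl | h
  · simp [h.le, h.not_ge, hq]
  · simp [hq_nil]
  · simp [h.le, h.not_ge, hq, dist_comm]

theorem isStrongGeodeticSet_univ (hG : G.Connected) : IsStrongGeodeticSet G Set.univ := by
  obtain ⟨p, hp⟩ := hG.exists_strongGeodeticChoice
  exact ⟨p, hp, fun w => ⟨w, trivial, w, trivial, Walk.start_mem_support _⟩⟩

theorem exists_isStrongGeodeticSet_ncard_eq_sg (hG : G.Connected) :
    ∃ S : Set V, S.ncard = sg G ∧ IsStrongGeodeticSet G S :=
  Nat.sInf_mem (s := {n | ∃ S : Set V, S.ncard = n ∧ IsStrongGeodeticSet G S})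
    ⟨_, Set.univ, rfl, isStrongGeodeticSet_univ hG⟩

theorem exists_isStrongGeodeticSet_compl_singleton (hG : G.Connected) {u v : V} (huv : u ≠ v)
    (hadj : ¬ G.Adj u v) : ∃ b, IsStrongGeodeticSet G {b}ᶜ := by
  obtain ⟨p, hp⟩ := hG.exists_strongGeodeticChoice
  have hlen : 0 < (p u v).length := by
    rw [(hp u v).2.1]
    exact (hG u v).pos_dist_of_ne huv
  have hub : G.Adj u ((p u v).getVert 1) := by
    simpa using (p u v).adj_getVert_succ hlen
  refine ⟨(p u v).getVert 1, p, hp, fun w => ?_⟩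
  by_cases hw : w = (p u v).getVert 1
  · exact ⟨u, hub.ne, v, fun hv => hadj (hv ▸ hub), hw ▸ (p u v).getVert_mem_support 1⟩
  · exact ⟨w, hw, w, hw, Walk.start_mem_support _⟩

theorem sg_lt_card [Finite V] (hG : G.Connected) {u v : V} (huv : u ≠ v) (hadj : ¬ G.Adj u v) :
    sg G < Nat.card V := by
  obtain ⟨b, hb⟩ := exists_isStrongGeodeticSet_compl_singleton hG huv hadj
  have hbc : ({b}ᶜ : Set V).ncard = Nat.card V - 1 := by
    rw [Set.ncard_compl, Set.ncard_singleton]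
  have hpos : 0 < Nat.card V := Nat.card_pos_iff.2 ⟨⟨b⟩, inferInstance⟩
  calc sg G ≤ Nat.card V - 1 := Nat.sInf_le ⟨_, hbc, hb⟩
    _ < Nat.card V := Nat.sub_lt hpos one_pos

namespace PathsCover

variable {p : ∀ u v : V, G.Walk u v} {X S : Set V}

theorem exists_private_vertex_of_minimal (hX : Minimal (PathsCover p · S) X) {x : V} (hx : x ∈ X) :
    ∃ w, ∀ u ∈ X, ∀ v ∈ S, w ∈ (p u v).support → u = x := by
  by_contra! h
  have hcover : PathsCover p (X \ {x}) S := fun w => by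
    obtain ⟨u, hu, v, hv, hw, hux⟩ := h w
    exact ⟨u, ⟨hu, hux⟩, v, hv, hw⟩
  exact (hX.le_of_le hcover Set.sdiff_subset hx).2 rfl

theorem ncard_le_ncard_compl_of_minimal [Finite V] (hX : Minimal (PathsCover p · S) X)
    (hS : Sᶜ.Nonempty) : X.ncard ≤ Sᶜ.ncard := by
  rcases le_or_gt X.ncard 1 with hX1 | hX1
  · exact hX1.trans ((Set.ncard_pos).2 hS)
  choose! f hf using fun x (hx : x ∈ X) => exists_private_vertex_of_minimal hX hx
  refine Set.ncard_le_ncard_of_injOn f (fun x hx hfx => ?_) (fun x hx y hy hxy => ?_)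
  · obtain ⟨y, hy, hyx⟩ := Set.exists_ne_of_one_lt_ncard hX1 x
    exact hyx (hf x hx y hy _ hfx (Walk.end_mem_support _))
  · obtain ⟨u, hu, v, hv, hw⟩ := hX.prop (f x)
    exact (hf x hx u hu v hv hw).symm.trans (hf y hy u hu v hv (hxy ▸ hw))

end PathsCover

end SimpleGraph

open SimpleGraph in
theorem stmt3 {V : Type*} [Fintype V] (G : SimpleGraph V) (hG : G.Connected)
    (hnc : ¬ ∀ u v : V, u ≠ v → G.Adj u v) :
    sgc G ≤ Fintype.card V - sg G := by
  push Not at hnc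
  obtain ⟨u, v, huv, hadj⟩ := hnc
  obtain ⟨S, hScard, p, hp, hS⟩ := exists_isStrongGeodeticSet_ncard_eq_sg hG
  obtain ⟨X, hXS, hX⟩ := exists_minimal_le_of_wellFoundedLT (PathsCover p · S) S hS
  have hSc : Sᶜ.Nonempty := by
    rw [← Set.ncard_pos, Set.ncard_compl, hScard]
    exact Nat.sub_pos_of_lt (sg_lt_card hG huv hadj)
  calc sgc G ≤ X.ncard := Nat.sInf_le ⟨S, X, p, hp, hScard, hS, hXS, rfl, hX.prop⟩
    _ ≤ Sᶜ.ncard := PathsCover.ncard_le_ncard_compl_of_minimal hX hSc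
    _ = Fintype.card V - sg G := by rw [Set.ncard_compl, hScard, Nat.card_eq_fintype_card]
end

section
/- If G is a connected graph with diameter d ≥ 2, then (sgc(G)·(sg(G) − sgc(G)) + C(sgc(G),2)) · (d − 1) ≥ n(G) − sg(G), where C(m,2) = m(m−1)/2. -/
open SimpleGraph

private lemma exists_choice {V : Type*} [Fintype V] (G : SimpleGraph V) (hG : G.Connected) :
    ∃ p : ∀ u v : V, G.Walk u v, StrongGeodeticChoice G p := by
  classical
  let e := Fintype.equivFin V
  choose q hq1 hq2 using fun u v => hG.exists_path_of_dist u v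
  refine ⟨fun u v => if e u ≤ e v then q u v else (q v u).reverse, fun u v => ?_⟩
  by_cases h : e u ≤ e v
  · by_cases h' : e v ≤ e u
    · have huv : u = v := e.injective (le_antisymm h h')
      subst huv
      simp only [le_refl, if_true]
      refine ⟨hq1 u u, hq2 u u, ?_⟩
      have hnil : (q u u).Nil := Walk.nil_iff_length_eq.2 (by rw [hq2]; simp)
      rw [hnil.eq_nil]
      rfl
    · simp only [h, h', if_true, if_false]
      exact ⟨hq1 u v, hq2 u v, trivial⟩
  · have h' : e v ≤ e u := le_of_not_ge h
    simp only [h, h', if_true, if_false]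
    refine ⟨(hq1 v u).reverse, ?_, ?_⟩
    · rw [Walk.length_reverse, hq2, G.dist_comm]
    · rw [Walk.reverse_reverse]

private lemma sgc_spec {V : Type*} [Fintype V] (G : SimpleGraph V) (hG : G.Connected) :
    ∃ (S X : Set V) (p : ∀ u v : V, G.Walk u v),
    StrongGeodeticChoice G p ∧ S.ncard = sg G ∧
    (∀ w : V, ∃ u ∈ S, ∃ v ∈ S, w ∈ (p u v).support) ∧
    X ⊆ S ∧ X.ncard = sgc G ∧
    (∀ w : V, ∃ u ∈ X, ∃ v ∈ S, w ∈ (p u v).support) := by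
  have hne : {n | ∃ S : Set V, S.ncard = n ∧ IsStrongGeodeticSet G S}.Nonempty := by
    obtain ⟨p, hp⟩ := exists_choice G hG
    exact ⟨(Set.univ : Set V).ncard, Set.univ, rfl, p, hp,
      fun w => ⟨w, trivial, w, trivial, (p w w).start_mem_support⟩⟩
  obtain ⟨S, hScard, p, hp, hcov⟩ := Nat.sInf_mem hne
  have hne2 : {k | ∃ (S X : Set V) (p : ∀ u v : V, G.Walk u v),
      StrongGeodeticChoice G p ∧ S.ncard = sg G ∧
      (∀ w : V, ∃ u ∈ S, ∃ v ∈ S, w ∈ (p u v).support) ∧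
      X ⊆ S ∧ X.ncard = k ∧
      (∀ w : V, ∃ u ∈ X, ∃ v ∈ S, w ∈ (p u v).support)}.Nonempty :=
    ⟨S.ncard, S, S, p, hp, hScard, hcov, subset_rfl, rfl, hcov⟩
  exact Nat.sInf_mem hne2

theorem stmt4 {V : Type*} [Fintype V] (G : SimpleGraph V) (hG : G.Connected)
    (hd : 2 ≤ G.diam) :
    (sgc G * (sg G - sgc G) + (sgc G).choose 2) * (G.diam - 1) ≥
      Fintype.card V - sg G := by
  classical
  obtain ⟨S, X, p, hp, hScard, hScov, hXS, hXcard, hcov⟩ := sgc_spec G hG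
  have hdiam : ∀ u v : V, G.dist u v ≤ G.diam :=
    fun u v => dist_le_diam (ediam_ne_top_of_diam_ne_zero (by omega))
  set Sf : Finset V := S.toFinset with hSf
  set Xf : Finset V := X.toFinset with hXf
  have hXfSf : Xf ⊆ Sf := by
    intro x hx
    simp only [hXf, hSf, Set.mem_toFinset] at hx ⊢
    exact hXS hx
  have hSfcard : Sf.card = sg G := by rw [← hScard, Set.ncard_eq_toFinset_card']
  have hXfcard : Xf.card = sgc G := by rw [← hXcard, Set.ncard_eq_toFinset_card']
  -- interior vertices of a fixed geodesic
  set I : V → V → Finset V := fun u v => (p u v).support.toFinset \ {u, v} with hI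
  have hsymm : ∀ u v : V, I u v = I v u := by
    intro u v
    simp only [hI, (hp u v).2.2, Walk.support_reverse, List.toFinset_reverse,
      Finset.pair_comm u v]
  set J : Sym2 V → Finset V := Sym2.lift ⟨I, hsymm⟩ with hJ
  have hJmk : ∀ u v : V, J s(u, v) = I u v := fun u v => rfl
  have hIdiag : ∀ u : V, I u u = ∅ := by
    intro u
    have hnil : (p u u).Nil := Walk.nil_iff_length_eq.2 (by rw [(hp u u).2.1]; simp)
    have hsup : (p u u).support = [u] := Walk.nil_iff_support_eq.1 hnil
    simp [hI, hsup]
  have hIcard : ∀ u v : V, (I u v).card ≤ G.diam - 1 := by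
    intro u v
    by_cases huv : u = v
    · subst huv; rw [hIdiag]; simp
    · have hsub : ({u, v} : Finset V) ⊆ (p u v).support.toFinset := by
        intro x hx
        rcases Finset.mem_insert.1 hx with h | h
        · rw [h]; exact List.mem_toFinset.2 (p u v).start_mem_support
        · rw [Finset.mem_singleton.1 h]; exact List.mem_toFinset.2 (p u v).end_mem_support
      have h1 : (I u v).card = (p u v).support.toFinset.card - 2 := by
        rw [hI]
        simp only
        rw [Finset.card_sdiff_of_subset hsub, Finset.card_pair huv]
      have h2 : (p u v).support.toFinset.card ≤ G.diam + 1 := by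
        calc (p u v).support.toFinset.card ≤ (p u v).support.length :=
              List.toFinset_card_le _
          _ = (p u v).length + 1 := Walk.length_support _
          _ ≤ G.diam + 1 := by rw [(hp u v).2.1]; exact Nat.add_le_add_right (hdiam u v) 1
      omega
  -- the pairs
  set Pf : Finset (Sym2 V) := (Xf ×ˢ Sf).image (fun q => s(q.1, q.2)) with hPf
  set Pd : Finset (Sym2 V) := Pf.filter (fun s => ¬ s.IsDiag) with hPd
  have hcover : Finset.univ \ Sf ⊆ Pd.biUnion J := by
    intro w hw
    have hwS : w ∉ S := by
      simp only [Finset.mem_sdiff, hSf, Set.mem_toFinset] at hw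
      exact hw.2
    obtain ⟨u, hu, v, hv, hwp⟩ := hcov w
    have huv : u ≠ v := by
      rintro rfl
      have hsup : (p u u).support = [u] := Walk.nil_iff_support_eq.1
        (Walk.nil_iff_length_eq.2 (by rw [(hp u u).2.1]; simp))
      rw [hsup] at hwp
      have hwu : w = u := by simpa using hwp
      exact hwS (hwu ▸ hXS hu)
    refine Finset.mem_biUnion.2 ⟨s(u, v), ?_, ?_⟩
    · refine Finset.mem_filter.2 ⟨?_, by simpa using huv⟩
      refine Finset.mem_image.2 ⟨(u, v), Finset.mem_product.2 ⟨?_, ?_⟩, rfl⟩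
      · simpa [hXf] using hu
      · simpa [hSf] using hv
    · rw [hJmk]
      refine Finset.mem_sdiff.2 ⟨List.mem_toFinset.2 hwp, ?_⟩
      intro hmem
      rcases Finset.mem_insert.1 hmem with h | h
      · exact hwS (h ▸ hXS hu)
      · exact hwS (Finset.mem_singleton.1 h ▸ hv)
  -- cardinality of Pd
  set A : Finset (Sym2 V) := (Xf ×ˢ (Sf \ Xf)).image (fun q => s(q.1, q.2)) with hA
  set B : Finset (Sym2 V) := Xf.sym2.filter (fun s => ¬ s.IsDiag) with hB
  have hPdsub : Pd ⊆ A ∪ B := by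
    intro s hs
    obtain ⟨hsP, hsd⟩ := Finset.mem_filter.1 hs
    obtain ⟨⟨u, v⟩, hq, rfl⟩ := Finset.mem_image.1 hsP
    obtain ⟨hu, hv⟩ := Finset.mem_product.1 hq
    by_cases hvX : v ∈ Xf
    · exact Finset.mem_union_right _ (Finset.mem_filter.2
        ⟨Finset.mk_mem_sym2_iff.2 ⟨hu, hvX⟩, hsd⟩)
    · exact Finset.mem_union_left _ (Finset.mem_image.2
        ⟨(u, v), Finset.mem_product.2 ⟨hu, Finset.mem_sdiff.2 ⟨hv, hvX⟩⟩, rfl⟩)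
  have hBcard : B.card = (sgc G).choose 2 := by
    have hdiagspec : Xf.sym2.filter (fun s => s.IsDiag) = Xf.image (fun u => s(u, u)) := by
      ext s
      constructor
      · intro hs
        obtain ⟨hs1, hs2⟩ := Finset.mem_filter.1 hs
        induction s with
        | _ u v =>
          have : u = v := Sym2.mk_isDiag_iff.1 hs2
          subst this
          exact Finset.mem_image.2 ⟨u, (Finset.mk_mem_sym2_iff.1 hs1).1, rfl⟩
      · intro hs
        obtain ⟨u, hu, rfl⟩ := Finset.mem_image.1 hs
        exact Finset.mem_filter.2 ⟨Finset.mk_mem_sym2_iff.2 ⟨hu, hu⟩, Sym2.mk_isDiag_iff.2 rfl⟩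
    have hdiagcard : (Xf.sym2.filter (fun s => s.IsDiag)).card = sgc G := by
      rw [hdiagspec, Finset.card_image_of_injective _ (fun a b h => by
        simpa [Sym2.eq_iff] using h), hXfcard]
    have hsplit := Finset.card_filter_add_card_filter_not
      (s := Xf.sym2) (p := fun s => s.IsDiag)
    have hsym2card : Xf.sym2.card = (sgc G + 1).choose 2 := by
      rw [Finset.card_sym2, hXfcard]
    have hch : (sgc G + 1).choose 2 = (sgc G).choose 1 + (sgc G).choose 2 :=
      Nat.choose_succ_succ _ _
    rw [Nat.choose_one_right] at hch
    rw [hB]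
    omega
  have hAcard : A.card ≤ sgc G * (sg G - sgc G) := by
    calc A.card ≤ (Xf ×ˢ (Sf \ Xf)).card := Finset.card_image_le
      _ = sgc G * (sg G - sgc G) := by
          rw [Finset.card_product, Finset.card_sdiff_of_subset hXfSf, hSfcard, hXfcard]
  have hPdcard : Pd.card ≤ sgc G * (sg G - sgc G) + (sgc G).choose 2 := by
    calc Pd.card ≤ (A ∪ B).card := Finset.card_le_card hPdsub
      _ ≤ A.card + B.card := Finset.card_union_le _ _
      _ ≤ sgc G * (sg G - sgc G) + (sgc G).choose 2 := by
          rw [hBcard]; exact Nat.add_le_add_right hAcard _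
  -- main counting
  have hmain : (Finset.univ \ Sf).card ≤ Pd.card * (G.diam - 1) := by
    calc (Finset.univ \ Sf).card ≤ (Pd.biUnion J).card := Finset.card_le_card hcover
      _ ≤ ∑ s ∈ Pd, (J s).card := Finset.card_biUnion_le
      _ ≤ Pd.card * (G.diam - 1) := by
          rw [← smul_eq_mul]
          refine Finset.sum_le_card_nsmul _ _ _ ?_
          intro s _
          induction s with
          | _ u v => rw [hJmk]; exact hIcard u v
  have hcompl : (Finset.univ \ Sf).card = Fintype.card V - sg G := by
    rw [Finset.card_sdiff_of_subset (Finset.subset_univ _), Finset.card_univ, hSfcard]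
  calc Fintype.card V - sg G = (Finset.univ \ Sf).card := hcompl.symm
    _ ≤ Pd.card * (G.diam - 1) := hmain
    _ ≤ (sgc G * (sg G - sgc G) + (sgc G).choose 2) * (G.diam - 1) :=
        Nat.mul_le_mul_right _ hPdcard
end

section
/- If G is a connected graph, then sg(Ŝ(G)) = n(G), where Ŝ(G) is obtained from the subdivision graph S(G) of G by adding all edges between distinct subdivision vertices. Moreover, V(G) is the unique minimum strong geodetic set of Ŝ(G). -/
open SimpleGraph

/-- The graph obtained from the subdivision graph of `G` by adding all edges
between distinct subdivision vertices. -/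
def hatS {V : Type*} (G : SimpleGraph V) : SimpleGraph (V ⊕ G.edgeSet) :=
  SimpleGraph.fromRel (fun a b =>
    match a, b with
    | Sum.inl v, Sum.inr e => v ∈ (e : Sym2 V)
    | Sum.inr _, Sum.inr _ => True
    | _, _ => False)

section Aux
open SimpleGraph

variable {W : Type*} {H : SimpleGraph W}

lemma dist_start_getVert_le (hconn : H.Connected) {u w : W} (q : H.Walk u w) (i : ℕ) :
    H.dist u (q.getVert i) ≤ i := by
  induction q generalizing i with
  | nil => simp [SimpleGraph.Walk.getVert, SimpleGraph.dist_self]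
  | @cons a b c h q ih =>
    cases i with
    | zero => simp [SimpleGraph.Walk.getVert_zero, SimpleGraph.dist_self]
    | succ i =>
      have h1 : H.dist a b ≤ 1 := by
        simpa using SimpleGraph.dist_le (Walk.cons h Walk.nil)
      calc H.dist a ((Walk.cons h q).getVert (i+1))
          ≤ H.dist a b + H.dist b ((Walk.cons h q).getVert (i+1)) := hconn.dist_triangle
        _ ≤ 1 + i := by
            rw [Walk.getVert_cons_succ]
            exact add_le_add h1 (ih i)
        _ = i + 1 := by omega

lemma dist_getVert_end_le {u w : W} (q : H.Walk u w) (i : ℕ) :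
    H.dist (q.getVert i) w ≤ q.length - i := by
  induction q generalizing i with
  | nil => simp [SimpleGraph.Walk.getVert, SimpleGraph.dist_self]
  | @cons a b c h q ih =>
    cases i with
    | zero =>
      simpa using SimpleGraph.dist_le (Walk.cons h q)
    | succ i =>
      rw [Walk.getVert_cons_succ]
      simpa using ih i

lemma exists_strongGeodeticChoice (hconn : H.Connected) :
    ∃ p : ∀ u v : W, H.Walk u v, StrongGeodeticChoice H p := by
  classical
  let r : W → W → Prop := WellOrderingRel
  have : IsWellOrder W r := WellOrderingRel.isWellOrder
  have htri : ∀ u v : W, r u v ∨ u = v ∨ r v u := fun u v => trichotomous u v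
  choose q hqp hql using fun u v : W => hconn.exists_path_of_dist u v
  have hdec : ∀ u v, Decidable (r u v) := fun u v => Classical.dec _
  refine ⟨fun u v =>
    if h : r u v then q u v
    else if h' : r v u then (q v u).reverse
    else (Walk.nil : H.Walk u u).copy rfl (((htri u v).resolve_left h).resolve_right h'), ?_⟩
  have key : ∀ u v : W, r u v →
      (if h : r u v then q u v
        else if h' : r v u then (q v u).reverse
        else (Walk.nil : H.Walk u u).copy rfl
          (((htri u v).resolve_left h).resolve_right h')) = q u v := by
    intro u v h
    simp [h]
  have keyr : ∀ u v : W, r v u →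
      (if h : r u v then q u v
        else if h' : r v u then (q v u).reverse
        else (Walk.nil : H.Walk u u).copy rfl
          (((htri u v).resolve_left h).resolve_right h')) = (q v u).reverse := by
    intro u v h
    have : ¬ r u v := asymm h
    simp [this, h]
  intro u v
  beta_reduce
  rcases htri u v with h | h | h
  · have h' : ¬ r v u := asymm h
    rw [key u v h, keyr v u h]
    exact ⟨hqp u v, hql u v, rfl⟩
  · subst h
    have h1 : ¬ r u u := irrefl u
    simp only [dif_neg h1]
    refine ⟨by simp, by simp [SimpleGraph.dist_self], by simp⟩
  · have h' : ¬ r u v := asymm h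
    rw [keyr u v h, key v u h]
    exact ⟨(hqp v u).reverse, by simp [hql v u, SimpleGraph.dist_comm], by simp⟩

end Aux

section HatS
open SimpleGraph

variable {V : Type*} {G : SimpleGraph V}

lemma hatS_not_adj_inl_inl {a b : V} : ¬ (hatS G).Adj (Sum.inl a) (Sum.inl b) := by
  simp [hatS, fromRel_adj]

lemma hatS_adj_inl_inr {a : V} {e : G.edgeSet} :
    (hatS G).Adj (Sum.inl a) (Sum.inr e) ↔ a ∈ (e : Sym2 V) := by
  simp [hatS, fromRel_adj]

lemma hatS_adj_inr_inr {e f : G.edgeSet} :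
    (hatS G).Adj (Sum.inr e) (Sum.inr f) ↔ e ≠ f := by
  simp [hatS, fromRel_adj]

lemma hatS_adj_inr_of_adj_inl {x : V ⊕ G.edgeSet} {a : V} (h : (hatS G).Adj x (Sum.inl a)) :
    ∃ e : G.edgeSet, x = Sum.inr e ∧ a ∈ (e : Sym2 V) := by
  match x with
  | Sum.inl b => exact absurd h hatS_not_adj_inl_inl
  | Sum.inr e => exact ⟨e, rfl, hatS_adj_inl_inr.mp h.symm⟩

lemma exists_adj_of_connected [Fintype V] (hG : G.Connected) (h2 : 2 ≤ Fintype.card V)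
    (v : V) : ∃ w, G.Adj v w := by
  obtain ⟨w, hw⟩ := Fintype.exists_ne_of_one_lt_card (by omega) v
  obtain ⟨q⟩ := hG.preconnected v w
  cases q with
  | nil => exact absurd rfl hw
  | cons h q => exact ⟨_, h⟩

lemma hatS_connected [Fintype V] (hG : G.Connected) (h2 : 2 ≤ Fintype.card V) :
    (hatS G).Connected := by
  have hne : Nonempty V := Fintype.card_pos_iff.mp (by omega)
  have hreach : ∀ x : V ⊕ G.edgeSet, ∃ e : G.edgeSet, (hatS G).Reachable x (Sum.inr e) := by
    rintro (v | e)
    · obtain ⟨w, hw⟩ := exists_adj_of_connected hG h2 v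
      exact ⟨⟨s(v, w), hw⟩, Adj.reachable (hatS_adj_inl_inr.mpr (Sym2.mem_mk_left _ _))⟩
    · exact ⟨e, Reachable.refl _⟩
  have hne2 : Nonempty (V ⊕ G.edgeSet) := ⟨Sum.inl (Classical.arbitrary V)⟩
  constructor
  intro x y
  obtain ⟨e, he⟩ := hreach x
  obtain ⟨f, hf⟩ := hreach y
  refine he.trans (Reachable.trans ?_ hf.symm)
  by_cases h : e = f
  · subst h; exact Reachable.refl _
  · exact Adj.reachable (hatS_adj_inr_inr.mpr h)

/-- A geodesic between `inl a` and `inl b` for adjacent `a b` passes through the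
subdivision vertex of the edge `ab`. -/
lemma hatS_geodesic_mem [Fintype V] (hG : G.Connected) (h2 : 2 ≤ Fintype.card V)
    {a b : V} (hab : G.Adj a b) (q : (hatS G).Walk (Sum.inl a) (Sum.inl b))
    (hlen : q.length = (hatS G).dist (Sum.inl a) (Sum.inl b)) :
    Sum.inr (⟨s(a, b), hab⟩ : G.edgeSet) ∈ q.support := by
  set e : G.edgeSet := ⟨s(a, b), hab⟩ with he
  have hwalk : (hatS G).dist (Sum.inl a) (Sum.inl b) ≤ 2 := by
    simpa using SimpleGraph.dist_le
      (Walk.cons ((hatS_adj_inl_inr (e := e)).mpr (Sym2.mem_mk_left a b))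
        (Walk.cons ((hatS_adj_inl_inr (e := e)).mpr (Sym2.mem_mk_right a b)).symm Walk.nil))
  have hne0 : q.length ≠ 0 := by
    intro h
    have := Walk.eq_of_length_eq_zero h
    simp only [Sum.inl.injEq] at this
    exact hab.ne this
  have hne1 : q.length ≠ 1 := by
    intro h
    have := q.adj_getVert_succ (i := 0) (by omega)
    rw [Walk.getVert_zero] at this
    have h2' : q.getVert 1 = Sum.inl b := by
      have := q.getVert_length
      rwa [h] at this
    rw [h2'] at this
    exact hatS_not_adj_inl_inl this
  have hlen2 : q.length = 2 := by omega
  have hadj1 : (hatS G).Adj (Sum.inl a) (q.getVert 1) := by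
    have := q.adj_getVert_succ (i := 0) (by omega)
    rwa [Walk.getVert_zero] at this
  have hadj2 : (hatS G).Adj (q.getVert 1) (Sum.inl b) := by
    have := q.adj_getVert_succ (i := 1) (by omega)
    have h2' : q.getVert 2 = Sum.inl b := by
      have := q.getVert_length
      rwa [hlen2] at this
    rwa [h2'] at this
  obtain ⟨f, hf, hbf⟩ := hatS_adj_inr_of_adj_inl hadj2
  have haf : a ∈ (f : Sym2 V) := by
    rw [hf] at hadj1
    exact hatS_adj_inl_inr.mp hadj1
  have hfe : f = e := by
    apply Subtype.ext
    exact (Sym2.mem_and_mem_iff hab.ne).mp ⟨haf, hbf⟩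
  rw [← hfe, ← hf]
  rw [Walk.mem_support_iff_exists_getVert]
  exact ⟨1, rfl, by omega⟩

/-- In any geodesic of `hatS G`, original vertices occur only as endpoints. -/
lemma hatS_inl_endpoint [Fintype V] (hG : G.Connected) (h2 : 2 ≤ Fintype.card V)
    {u w : V ⊕ G.edgeSet} (q : (hatS G).Walk u w)
    (hlen : q.length = (hatS G).dist u w) {v : V} (hv : Sum.inl v ∈ q.support) :
    Sum.inl v = u ∨ Sum.inl v = w := by
  have hconn := hatS_connected hG h2
  rw [Walk.mem_support_iff_exists_getVert] at hv
  obtain ⟨i, hi, hile⟩ := hv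
  by_cases h0 : i = 0
  · left; rw [← hi, h0, Walk.getVert_zero]
  by_cases hL : i = q.length
  · right; rw [← hi, hL, Walk.getVert_length]
  exfalso
  have hipos : 1 ≤ i := by omega
  have hilt : i < q.length := by omega
  have hadj1 : (hatS G).Adj (q.getVert (i - 1)) (Sum.inl v) := by
    have := q.adj_getVert_succ (i := i - 1) (by omega)
    rwa [show i - 1 + 1 = i by omega, hi] at this
  have hadj2 : (hatS G).Adj (Sum.inl v) (q.getVert (i + 1)) := by
    have := q.adj_getVert_succ (i := i) hilt
    rwa [hi] at this
  obtain ⟨ex, hex, -⟩ := hatS_adj_inr_of_adj_inl hadj1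
  obtain ⟨ey, hey, -⟩ := hatS_adj_inr_of_adj_inl hadj2.symm
  have hxy : (hatS G).dist (q.getVert (i - 1)) (q.getVert (i + 1)) ≤ 1 := by
    rw [hex, hey]
    by_cases h : ex = ey
    · subst h; simp [SimpleGraph.dist_self]
    · simpa using SimpleGraph.dist_le (Walk.cons (hatS_adj_inr_inr.mpr h) Walk.nil)
  have d1 : (hatS G).dist u (q.getVert (i - 1)) ≤ i - 1 :=
    dist_start_getVert_le hconn q (i - 1)
  have d2 : (hatS G).dist (q.getVert (i + 1)) w ≤ q.length - (i + 1) :=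
    dist_getVert_end_le q (i + 1)
  have tri1 : (hatS G).dist u w ≤
      (hatS G).dist u (q.getVert (i - 1)) + (hatS G).dist (q.getVert (i - 1)) w :=
    hconn.dist_triangle
  have tri2 : (hatS G).dist (q.getVert (i - 1)) w ≤
      (hatS G).dist (q.getVert (i - 1)) (q.getVert (i + 1)) +
        (hatS G).dist (q.getVert (i + 1)) w :=
    hconn.dist_triangle
  omega

end HatS

theorem stmt5 {V : Type*} [Fintype V] [DecidableEq V] (G : SimpleGraph V)
    [DecidableRel G.Adj] (hG : G.Connected) (h2 : 2 ≤ Fintype.card V) :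
    sg (hatS G) = Fintype.card V ∧
    ∀ S : Set (V ⊕ G.edgeSet), IsStrongGeodeticSet (hatS G) S →
      S.ncard = sg (hatS G) → S = Set.range Sum.inl := by
  classical
  have hconn := hatS_connected hG h2
  have hsub : ∀ S : Set (V ⊕ G.edgeSet), IsStrongGeodeticSet (hatS G) S →
      Set.range (Sum.inl : V → V ⊕ G.edgeSet) ⊆ S := by
    intro S hS
    rintro _ ⟨v, rfl⟩
    obtain ⟨p, hp, hcov⟩ := hS
    obtain ⟨u, hu, w, hw, hmem⟩ := hcov (Sum.inl v)
    rcases hatS_inl_endpoint hG h2 (p u w) (hp u w).2.1 hmem with h | h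
    · rwa [h]
    · rwa [h]
  have hcardrange : (Set.range (Sum.inl : V → V ⊕ G.edgeSet)).ncard = Fintype.card V := by
    rw [← Nat.card_coe_set_eq, Nat.card_range_of_injective Sum.inl_injective,
      Nat.card_eq_fintype_card]
  have hSGS : IsStrongGeodeticSet (hatS G) (Set.range Sum.inl) := by
    obtain ⟨p, hp⟩ := exists_strongGeodeticChoice hconn
    refine ⟨p, hp, ?_⟩
    rintro (v | e)
    · exact ⟨Sum.inl v, ⟨v, rfl⟩, Sum.inl v, ⟨v, rfl⟩, Walk.start_mem_support _⟩
    · obtain ⟨es, he⟩ := e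
      induction es using Sym2.ind with
      | _ a b =>
        have hab : G.Adj a b := G.mem_edgeSet.mp he
        refine ⟨Sum.inl a, ⟨a, rfl⟩, Sum.inl b, ⟨b, rfl⟩, ?_⟩
        exact hatS_geodesic_mem hG h2 hab _ (hp _ _).2.1
  have hmem : Fintype.card V ∈ {n | ∃ S : Set (V ⊕ G.edgeSet),
      S.ncard = n ∧ IsStrongGeodeticSet (hatS G) S} :=
    ⟨Set.range Sum.inl, hcardrange, hSGS⟩
  have hlb : ∀ n ∈ {n | ∃ S : Set (V ⊕ G.edgeSet),
      S.ncard = n ∧ IsStrongGeodeticSet (hatS G) S}, Fintype.card V ≤ n := by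
    rintro n ⟨S, rfl, hS⟩
    calc Fintype.card V = _ := hcardrange.symm
      _ ≤ S.ncard := Set.ncard_le_ncard (hsub S hS) S.toFinite
  have hsg : sg (hatS G) = Fintype.card V :=
    le_antisymm (Nat.sInf_le hmem) (le_csInf ⟨_, hmem⟩ hlb)
  refine ⟨hsg, ?_⟩
  intro S hS hcard
  rw [hsg, ← hcardrange] at hcard
  exact (Set.eq_of_subset_of_ncard_le (hsub S hS) hcard.le S.toFinite).symm
end

section
/- For every n ≥ 1, the strong geodetic number of the complete bipartite graph K_{n, C(n,2)} equals n, where C(n,2) = n(n−1)/2. -/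
open SimpleGraph

namespace StmtSix

abbrev V2 (n : ℕ) := Fin n ⊕ Fin (n.choose 2)
abbrev G2 (n : ℕ) : SimpleGraph (V2 n) := completeBipartiteGraph (Fin n) (Fin (n.choose 2))

variable {n : ℕ}

lemma adj_lr (i : Fin n) (a : Fin (n.choose 2)) : (G2 n).Adj (Sum.inl i) (Sum.inr a) := by simp
lemma adj_rl (a : Fin (n.choose 2)) (i : Fin n) : (G2 n).Adj (Sum.inr a) (Sum.inl i) := by simp

lemma dist_lr (i : Fin n) (a : Fin (n.choose 2)) : (G2 n).dist (Sum.inl i) (Sum.inr a) = 1 :=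
  dist_eq_one_iff_adj.mpr (adj_lr i a)
lemma dist_rl (a : Fin (n.choose 2)) (i : Fin n) : (G2 n).dist (Sum.inr a) (Sum.inl i) = 1 :=
  dist_eq_one_iff_adj.mpr (adj_rl a i)

lemma two_le_of_ne {i j : Fin n} (h : i ≠ j) : 2 ≤ n := by
  by_contra h'
  have : Subsingleton (Fin n) := Fin.subsingleton_iff_le_one.mpr (by omega)
  exact h (Subsingleton.elim i j)

lemma dist_two_aux {u v : V2 n} (hne : u ≠ v) (hna : ¬ (G2 n).Adj u v)
    (q : (G2 n).Walk u v) (hq : q.length = 2) : (G2 n).dist u v = 2 := by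
  have h1 : (G2 n).dist u v ≤ 2 := hq ▸ dist_le q
  have h2 : (G2 n).dist u v ≠ 0 := fun h0 =>
    (dist_eq_zero_iff_eq_or_not_reachable.mp h0).elim hne (fun hr => hr ⟨q⟩)
  have h3 : (G2 n).dist u v ≠ 1 := fun h => hna (dist_eq_one_iff_adj.mp h)
  omega

lemma dist_ll {i j : Fin n} (h : i ≠ j) : (G2 n).dist (Sum.inl i) (Sum.inl j) = 2 := by
  have hm : 0 < n.choose 2 := Nat.choose_pos (two_le_of_ne h)
  exact dist_two_aux (by simp [h]) (by simp)
    (Walk.cons (adj_lr i ⟨0, hm⟩) (Walk.cons (adj_rl _ j) Walk.nil)) rfl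

lemma dist_rr (hn : 0 < n) {a b : Fin (n.choose 2)} (h : a ≠ b) :
    (G2 n).dist (Sum.inr a) (Sum.inr b) = 2 :=
  dist_two_aux (by simp [h]) (by simp)
    (Walk.cons (adj_rl a ⟨0, hn⟩) (Walk.cons (adj_lr _ b) Walk.nil)) rfl

lemma dist_le_two (hn : 0 < n) (u v : V2 n) : (G2 n).dist u v ≤ 2 := by
  rcases u with i | a <;> rcases v with j | b
  · rcases eq_or_ne i j with rfl | h
    · simp [SimpleGraph.dist_self]
    · exact (dist_ll h).le
  · exact (dist_lr i b).le.trans one_le_two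
  · exact (dist_rl a j).le.trans one_le_two
  · rcases eq_or_ne a b with rfl | h
    · simp [SimpleGraph.dist_self]
    · exact (dist_rr hn h).le

noncomputable def E2 (n : ℕ) : {z : Sym2 (Fin n) // ¬ z.IsDiag} ≃ Fin (n.choose 2) :=
  Fintype.equivFinOfCardEq (by rw [Sym2.card_subtype_not_diag, Fintype.card_fin])

noncomputable def pw (hn : 0 < n) : ∀ u v : V2 n, (G2 n).Walk u v
  | Sum.inl i, Sum.inl j =>
    if h : i = j then by subst h; exact Walk.nil
    else Walk.cons (adj_lr i (E2 n ⟨s(i,j), by simp [Sym2.mk_isDiag_iff, h]⟩))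
      (Walk.cons (adj_rl _ j) Walk.nil)
  | Sum.inl i, Sum.inr a => Walk.cons (adj_lr i a) Walk.nil
  | Sum.inr a, Sum.inl i => Walk.cons (adj_rl a i) Walk.nil
  | Sum.inr a, Sum.inr b =>
    if h : a = b then by subst h; exact Walk.nil
    else Walk.cons (adj_rl a ⟨0, hn⟩) (Walk.cons (adj_lr _ b) Walk.nil)

lemma pw_choice (hn : 0 < n) : StrongGeodeticChoice (G2 n) (pw hn) := by
  rintro (i | a) (j | b)
  · simp only [pw]
    rcases eq_or_ne i j with rfl | h
    · simp [SimpleGraph.dist_self]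
    · rw [dif_neg h, dif_neg h.symm]
      refine ⟨?_, ?_, ?_⟩
      · simp [Walk.isPath_def, h]
      · simp [dist_ll h]
      · have : (⟨s(j,i), by simp [Sym2.mk_isDiag_iff, h.symm]⟩ :
            {z : Sym2 (Fin n) // ¬ z.IsDiag}) = ⟨s(i,j), by simp [Sym2.mk_isDiag_iff, h]⟩ :=
          Subtype.ext (Sym2.eq_swap)
        rw [this]
        simp [Walk.reverse_cons]
  · simp only [pw]
    exact ⟨by simp [Walk.isPath_def], by simp [dist_lr], by simp [Walk.reverse_cons]⟩
  · simp only [pw]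
    exact ⟨by simp [Walk.isPath_def], by simp [dist_rl], by simp [Walk.reverse_cons]⟩
  · simp only [pw]
    rcases eq_or_ne a b with rfl | h
    · simp [SimpleGraph.dist_self]
    · rw [dif_neg h, dif_neg h.symm]
      exact ⟨by simp [Walk.isPath_def, h], by simp [dist_rr hn h], by simp [Walk.reverse_cons]⟩

lemma pw_cover (hn : 0 < n) (w : V2 n) :
    ∃ u ∈ Set.range (Sum.inl : Fin n → V2 n), ∃ v ∈ Set.range (Sum.inl : Fin n → V2 n),
      w ∈ ((pw hn) u v).support := by
  rcases w with i | a
  · exact ⟨Sum.inl i, ⟨i, rfl⟩, Sum.inl i, ⟨i, rfl⟩, by simp [pw]⟩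
  · obtain ⟨⟨i, j⟩, hij⟩ := Quot.exists_rep ((E2 n).symm a).1
    have hd : ¬ (s(i,j) : Sym2 (Fin n)).IsDiag := by
      rw [show (s(i,j) : Sym2 (Fin n)) = ((E2 n).symm a).1 from hij]
      exact ((E2 n).symm a).2
    have hne : i ≠ j := by simpa [Sym2.mk_isDiag_iff] using hd
    refine ⟨Sum.inl i, ⟨i, rfl⟩, Sum.inl j, ⟨j, rfl⟩, ?_⟩
    simp only [pw, dif_neg hne]
    have : E2 n ⟨s(i,j), by simp [Sym2.mk_isDiag_iff, hne]⟩ = a := by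
      have h2 : (⟨s(i,j), by simp [Sym2.mk_isDiag_iff, hne]⟩ :
          {z : Sym2 (Fin n) // ¬ z.IsDiag}) = (E2 n).symm a := Subtype.ext hij
      rw [h2, Equiv.apply_symm_apply]
    simp [this]

lemma range_inl_ncard : (Set.range (Sum.inl : Fin n → V2 n)).ncard = n := by
  rw [← Set.image_univ, Set.ncard_image_of_injective _ Sum.inl_injective, Set.ncard_univ,
    Nat.card_eq_fintype_card, Fintype.card_fin]

lemma interior_uniq {V : Type*} {G : SimpleGraph V} {u v w w' : V}
    (q : G.Walk u v) (hq : q.IsPath) (hlen : q.length ≤ 2)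
    (hw : w ∈ q.support) (hw' : w' ∈ q.support)
    (hwu : w ≠ u) (hwv : w ≠ v) (hw'u : w' ≠ u) (hw'v : w' ≠ v) (huv : u ≠ v) : w = w' := by
  classical
  by_contra hww'
  have hnd : q.support.Nodup := hq.support_nodup
  have hsub : ({u, v, w, w'} : Finset V) ⊆ q.support.toFinset := by
    intro x hx
    simp only [Finset.mem_insert, Finset.mem_singleton] at hx
    rw [List.mem_toFinset]
    rcases hx with rfl | rfl | rfl | rfl
    · exact q.start_mem_support
    · exact q.end_mem_support
    · exact hw
    · exact hw'
  have hcard : ({u, v, w, w'} : Finset V).card = 4 := by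
    rw [Finset.card_insert_of_notMem (by simp [huv, hwu.symm, hw'u.symm]),
      Finset.card_insert_of_notMem (by simp [hwv.symm, hw'v.symm]),
      Finset.card_insert_of_notMem (by simp [hww']), Finset.card_singleton]
  have h4 : 4 ≤ q.support.toFinset.card := hcard ▸ Finset.card_le_card hsub
  rw [List.toFinset_card_of_nodup hnd] at h4
  have := q.length_support
  omega

lemma lower_bound (hn : 0 < n) {S : Set (V2 n)} (h : IsStrongGeodeticSet (G2 n) S) :
    n ≤ S.ncard := by
  classical
  obtain ⟨p, hch, hcov⟩ := h
  have key : ∀ w : (Sᶜ : Set (V2 n)), ∃ uv : S × S, uv.1.1 ≠ uv.2.1 ∧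
      (w : V2 n) ∈ (p uv.1 uv.2).support := by
    rintro ⟨w, hw⟩
    obtain ⟨u, hu, v, hv, hmem⟩ := hcov w
    refine ⟨(⟨u, hu⟩, ⟨v, hv⟩), ?_, hmem⟩
    rintro h'
    simp only at h'
    subst h'
    have hl : (p u u).length = 0 := by rw [(hch u u).2.1, SimpleGraph.dist_self]
    have : (p u u).support = [u] := by
      have hls := (p u u).length_support
      rw [hl] at hls
      have h2 := (p u u).support_eq_cons
      rw [h2] at hls ⊢
      simp only [List.length_cons, Nat.add_eq, Nat.succ_eq_add_one] at hls
      have : (p u u).support.tail = [] := List.eq_nil_of_length_eq_zero (by omega)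
      rw [this]
    rw [this] at hmem
    simp at hmem
    subst hmem
    exact hw hu
  choose f hf using key
  set F : (Sᶜ : Set (V2 n)) → {z : Sym2 S // ¬ z.IsDiag} := fun w =>
    ⟨s((f w).1, (f w).2), by
      simp only [Sym2.mk_isDiag_iff]
      exact fun hh => (hf w).1 (congrArg Subtype.val hh)⟩ with hF
  have hFinj : Function.Injective F := by
    rintro w w' hww'
    have h1 : (s((f w).1, (f w).2) : Sym2 S) = s((f w').1, (f w').2) :=
      congrArg Subtype.val hww'
    rw [Sym2.eq_iff] at h1
    have hmem' : (w' : V2 n) ∈ (p (f w).1 (f w).2).support := by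
      rcases h1 with ⟨h1, h2⟩ | ⟨h1, h2⟩
      · rw [h1, h2]; exact (hf w').2
      · have h3 := (hf w').2
        rw [← h2, ← h1, (hch _ _).2.2, Walk.support_reverse, List.mem_reverse] at h3
        exact h3
    have hu := (f w).1.2
    have hv := (f w).2.2
    have heq : (w : V2 n) = (w' : V2 n) := by
      refine interior_uniq (p (f w).1 (f w).2) (hch _ _).1 ?_ (hf w).2 hmem' ?_ ?_ ?_ ?_ (hf w).1
      · rw [(hch _ _).2.1]; exact dist_le_two hn _ _
      · exact fun hh => w.2 (hh ▸ hu)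
      · exact fun hh => w.2 (hh ▸ hv)
      · exact fun hh => w'.2 (hh ▸ hu)
      · exact fun hh => w'.2 (hh ▸ hv)
    exact Subtype.ext heq
  have hcount : (Sᶜ : Set (V2 n)).ncard ≤ S.ncard.choose 2 := by
    have h1 : Nat.card (Sᶜ : Set (V2 n)) ≤ Nat.card {z : Sym2 S // ¬ z.IsDiag} :=
      Nat.card_le_card_of_injective F hFinj
    have h2 : Nat.card {z : Sym2 S // ¬ z.IsDiag} = (Nat.card S).choose 2 := by
      rw [Nat.card_eq_fintype_card, Sym2.card_subtype_not_diag, Nat.card_eq_fintype_card]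
    rw [h2, Nat.card_coe_set_eq] at h1
    rw [← Nat.card_coe_set_eq]
    exact h1
  have htot : S.ncard + (Sᶜ : Set (V2 n)).ncard = n + n.choose 2 := by
    rw [Set.ncard_add_ncard_compl, Nat.card_eq_fintype_card, Fintype.card_sum,
      Fintype.card_fin, Fintype.card_fin]
  by_contra hlt
  push_neg at hlt
  set k := S.ncard
  have hk : k ≤ n - 1 := by omega
  have h1 : k.choose 2 ≤ (n-1).choose 2 := Nat.choose_le_choose 2 hk
  have h2 : n.choose 2 = (n-1).choose 2 + (n-1) := by
    have : n = (n-1) + 1 := by omega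
    rw [this]
    rw [Nat.choose_succ_succ]
    simp [Nat.choose_one_right]
    omega
  omega

end StmtSix

open StmtSix in
theorem stmt6 (n : ℕ) (hn : 1 ≤ n) :
    sg (completeBipartiteGraph (Fin n) (Fin (n.choose 2))) = n := by
  have hmem : n ∈ {k | ∃ S : Set (V2 n), S.ncard = k ∧ IsStrongGeodeticSet (G2 n) S} :=
    ⟨Set.range Sum.inl, range_inl_ncard, pw hn, pw_choice hn, pw_cover hn⟩
  apply le_antisymm
  · exact Nat.sInf_le hmem
  · refine le_csInf ⟨n, hmem⟩ ?_
    rintro k ⟨S, hk, hS⟩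
    exact hk ▸ lower_bound hn hS
end

section
/- Let n ≥ 3 and let G be the complete multipartite graph with parts of size 2 (cocktail-party graph) if n is even, or with ⌊n/2⌋ parts of size 2 and one part of size 1 if n is odd, so that G has n vertices. Then sg(G) = n − ⌊n/3⌋. -/
open SimpleGraph

namespace Stmt8Aux

abbrev GG (n : ℕ) : SimpleGraph (Fin n) :=
  SimpleGraph.fromRel (fun i j : Fin n => i.val / 2 ≠ j.val / 2)

lemma gg_adj {n : ℕ} {i j : Fin n} : (GG n).Adj i j ↔ i.val / 2 ≠ j.val / 2 := by
  rw [SimpleGraph.fromRel_adj]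
  constructor
  · rintro ⟨-, h | h⟩ <;> omega
  · intro h
    exact ⟨fun he => h (by rw [he]), Or.inl h⟩

/-- the designated middle vertex for the part `t`. -/
def midP (n : ℕ) (hn : 3 ≤ n) (t : ℕ) : Fin n :=
  if h : t < n / 3 then ⟨n - n / 3 + t, by omega⟩ else ⟨0, by omega⟩

lemma midP_part {n : ℕ} (hn : 3 ≤ n) (t : ℕ) : (midP n hn t).val / 2 ≠ t := by
  unfold midP
  split
  · show (n - n / 3 + t) / 2 ≠ t
    omega
  · show 0 / 2 ≠ t
    omega

/-- The fixed system of geodesics. -/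
def pf {n : ℕ} (hn : 3 ≤ n) (u v : Fin n) : (GG n).Walk u v :=
  if h : u = v then SimpleGraph.Walk.nil.copy rfl h
  else if h2 : u.val / 2 = v.val / 2 then
    SimpleGraph.Walk.cons
      (show (GG n).Adj u (midP n hn (u.val / 2)) from gg_adj.2 (Ne.symm (midP_part hn _)))
      (SimpleGraph.Walk.cons
        (show (GG n).Adj (midP n hn (u.val / 2)) v from gg_adj.2 (by rw [h2]; exact midP_part hn _))
        SimpleGraph.Walk.nil)
  else SimpleGraph.Walk.cons (gg_adj.2 h2) SimpleGraph.Walk.nil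

lemma cons2_congr {V : Type*} {G : SimpleGraph V} {u v a b : V} (hab : a = b)
    (h1 : G.Adj u a) (h2 : G.Adj a v) (h1' : G.Adj u b) (h2' : G.Adj b v) :
    SimpleGraph.Walk.cons h1 (SimpleGraph.Walk.cons h2 SimpleGraph.Walk.nil) =
      SimpleGraph.Walk.cons h1' (SimpleGraph.Walk.cons h2' SimpleGraph.Walk.nil) := by
  subst hab; rfl

lemma pf_self {n : ℕ} (hn : 3 ≤ n) (u : Fin n) :
    pf hn u u = SimpleGraph.Walk.nil.copy rfl rfl := dif_pos rfl

lemma pf_mid {n : ℕ} (hn : 3 ≤ n) {u v : Fin n} (h : u ≠ v) (h2 : u.val / 2 = v.val / 2) :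
    pf hn u v = SimpleGraph.Walk.cons
      (show (GG n).Adj u (midP n hn (u.val / 2)) from gg_adj.2 (Ne.symm (midP_part hn _)))
      (SimpleGraph.Walk.cons
        (show (GG n).Adj (midP n hn (u.val / 2)) v from gg_adj.2 (by rw [h2]; exact midP_part hn _))
        SimpleGraph.Walk.nil) := by
  rw [pf, dif_neg h, dif_pos h2]

lemma pf_edge {n : ℕ} (hn : 3 ≤ n) {u v : Fin n} (h : u ≠ v) (h2 : ¬ u.val / 2 = v.val / 2) :
    pf hn u v = SimpleGraph.Walk.cons (gg_adj.2 h2) SimpleGraph.Walk.nil := by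
  rw [pf, dif_neg h, dif_neg h2]

lemma dist_same_part {n : ℕ} (hn : 3 ≤ n) {u v : Fin n} (h : u ≠ v)
    (h2 : u.val / 2 = v.val / 2) : (GG n).dist u v = 2 := by
  have hle : (GG n).dist u v ≤ 2 := by
    have := SimpleGraph.dist_le (pf hn u v)
    rwa [pf_mid hn h h2] at this
  have h0 : (GG n).dist u v ≠ 0 := by
    rw [ne_eq, SimpleGraph.dist_eq_zero_iff_eq_or_not_reachable]
    push_neg
    exact ⟨h, ⟨pf hn u v⟩⟩
  have h1 : (GG n).dist u v ≠ 1 := by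
    rw [ne_eq, SimpleGraph.dist_eq_one_iff_adj]
    intro had
    exact (gg_adj.1 had) h2
  omega

lemma pf_choice {n : ℕ} (hn : 3 ≤ n) : StrongGeodeticChoice (GG n) (pf hn) := by
  intro u v
  by_cases h : u = v
  · subst h
    rw [pf_self]
    simp [SimpleGraph.dist_self]
  · by_cases h2 : u.val / 2 = v.val / 2
    · have hum : u ≠ midP n hn (u.val / 2) := fun he => midP_part hn (u.val / 2) (by rw [← he])
      have hvm : v ≠ midP n hn (u.val / 2) := fun he =>
        midP_part hn (u.val / 2) (by rw [← he, h2])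
      refine ⟨?_, ?_, ?_⟩
      · rw [pf_mid hn h h2]
        simp [SimpleGraph.Walk.cons_isPath_iff, h, hum, hvm, Ne.symm hvm]
      · rw [pf_mid hn h h2, dist_same_part hn h h2]
        simp
      · rw [pf_mid hn h h2, pf_mid hn (Ne.symm h) h2.symm]
        simp only [SimpleGraph.Walk.reverse_cons, SimpleGraph.Walk.reverse_nil,
          SimpleGraph.Walk.nil_append, SimpleGraph.Walk.cons_append]
        exact cons2_congr (by rw [h2]) _ _ _ _
    · refine ⟨?_, ?_, ?_⟩
      · rw [pf_edge hn h h2]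
        simp [h]
      · rw [pf_edge hn h h2]
        rw [SimpleGraph.dist_eq_one_iff_adj.2 (gg_adj.2 h2)]
        simp
      · rw [pf_edge hn h h2, pf_edge hn (Ne.symm h) (fun he => h2 he.symm)]
        simp only [SimpleGraph.Walk.reverse_cons, SimpleGraph.Walk.reverse_nil,
          SimpleGraph.Walk.nil_append]

lemma sgs_upper {n : ℕ} (hn : 3 ≤ n) :
    IsStrongGeodeticSet (GG n) {i : Fin n | i.val < n - n / 3} := by
  refine ⟨pf hn, pf_choice hn, ?_⟩
  intro w
  by_cases hw : w.val < n - n / 3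
  · exact ⟨w, hw, w, hw, by rw [pf_self]; simp⟩
  · set k := n / 3 with hk
    have hk1 : 1 ≤ k := by omega
    set t := w.val - (n - k) with ht
    have htk : t < k := by have := w.2; omega
    have h2t : 2 * t + 1 < n := by omega
    refine ⟨⟨2 * t, by omega⟩, by simp; omega, ⟨2 * t + 1, by omega⟩, by simp; omega, ?_⟩
    have hne : (⟨2 * t, by omega⟩ : Fin n) ≠ ⟨2 * t + 1, h2t⟩ := by
      simp [Fin.ext_iff]
    have hpart : (2 * t) / 2 = (2 * t + 1) / 2 := by omega
    rw [pf_mid hn hne hpart]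
    have hmid : midP n hn t = w := by
      rw [midP, dif_pos htk]
      exact Fin.ext (by simp; omega)
    simp
    exact Or.inr (Or.inl hmid.symm)

lemma support_len0 {V : Type*} {G : SimpleGraph V} {u v : V} (q : G.Walk u v)
    (h : q.length = 0) : q.support = [u] := by
  cases q with
  | nil => simp
  | cons h1 q1 => simp at h

lemma support_len1 {V : Type*} {G : SimpleGraph V} {u v : V} (q : G.Walk u v)
    (h : q.length = 1) : q.support = [u, v] := by
  cases q with
  | nil => simp at h
  | cons h1 q1 =>
    cases q1 with
    | nil => simp
    | cons h2 q2 => simp [SimpleGraph.Walk.length_cons] at h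

lemma support_len2 {V : Type*} {G : SimpleGraph V} {u v : V} (q : G.Walk u v)
    (h : q.length = 2) : ∃ m, q.support = [u, m, v] := by
  cases q with
  | nil => simp at h
  | cons h1 q1 =>
    cases q1 with
    | nil => simp at h
    | cons h2 q2 =>
      cases q2 with
      | nil => exact ⟨_, rfl⟩
      | cons h3 q3 => simp [SimpleGraph.Walk.length_cons] at h

lemma sgs_lower {n : ℕ} (hn : 3 ≤ n) (S : Set (Fin n)) (m : ℕ) (hS : S.ncard = m)
    (h : IsStrongGeodeticSet (GG n) S) : n - n / 3 ≤ m := by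
  classical
  obtain ⟨p, hp, hcov⟩ := h
  -- every vertex outside S is the middle of a fixed geodesic between a full part in S
  have key : ∀ w : Fin n, ∃ u v : Fin n, w ∉ S →
      u ∈ S ∧ v ∈ S ∧ u ≠ v ∧ u.val / 2 = v.val / 2 ∧ (p u v).support = [u, w, v] := by
    intro w
    by_cases hw : w ∈ S
    · exact ⟨w, w, fun hc => absurd hw hc⟩
    · obtain ⟨u, hu, v, hv, hwm⟩ := hcov w
      have hwu : w ≠ u := fun he => hw (he ▸ hu)
      have hwv : w ≠ v := fun he => hw (he ▸ hv)
      refine ⟨u, v, fun _ => ?_⟩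
      by_cases huv : u = v
      · subst huv
        have hl : (p u u).length = 0 := by
          rw [(hp u u).2.1, SimpleGraph.dist_self]
        rw [support_len0 _ hl] at hwm
        simp at hwm
        exact absurd hwm hwu
      · by_cases h2 : u.val / 2 = v.val / 2
        · have hl : (p u v).length = 2 := by
            rw [(hp u v).2.1, dist_same_part hn huv h2]
          obtain ⟨mm, hsupp⟩ := support_len2 _ hl
          rw [hsupp] at hwm
          simp at hwm
          rcases hwm with h' | h' | h'
          · exact absurd h' hwu
          · exact ⟨hu, hv, huv, h2, by rw [hsupp, h']⟩
          · exact absurd h' hwv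
        · have hl : (p u v).length = 1 := by
            rw [(hp u v).2.1, SimpleGraph.dist_eq_one_iff_adj.2 (gg_adj.2 h2)]
          rw [support_len1 _ hl] at hwm
          simp at hwm
          rcases hwm with h' | h'
          · exact absurd h' hwu
          · exact absurd h' hwv
  choose uf vf hkey using key
  -- counting
  have hSf : S.toFinset.card = m := by
    rwa [Set.ncard_eq_toFinset_card'] at hS
  set T : Finset (Fin n) := S.toFinsetᶜ with hT
  have hTcard : T.card = n - m := by
    rw [hT, Finset.card_compl, hSf, Fintype.card_fin]
  have hTmem : ∀ w ∈ T, w ∉ S := by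
    intro w hw
    rw [hT, Finset.mem_compl, Set.mem_toFinset] at hw
    exact hw
  set ψ : Fin n → Finset (Fin n) := fun w => {uf w, vf w} with hψ
  have hψcard : ∀ w ∈ T, (ψ w).card = 2 := by
    intro w hw
    obtain ⟨-, -, hne, -, -⟩ := hkey w (hTmem w hw)
    rw [hψ]
    simp [Finset.card_insert_of_notMem, hne]
  have hψsub : ∀ w ∈ T, ψ w ⊆ S.toFinset := by
    intro w hw
    obtain ⟨hu, hv, -, -, -⟩ := hkey w (hTmem w hw)
    intro x hx
    rw [hψ] at hx
    simp at hx
    rcases hx with rfl | rfl <;> rw [Set.mem_toFinset] <;> assumption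
  have hdisj : ∀ w1 ∈ T, ∀ w2 ∈ T, w1 ≠ w2 → Disjoint (ψ w1) (ψ w2) := by
    intro w1 hw1 w2 hw2 hne12
    obtain ⟨hu1, hv1, hne1, hp1, hs1⟩ := hkey w1 (hTmem w1 hw1)
    obtain ⟨hu2, hv2, hne2, hp2, hs2⟩ := hkey w2 (hTmem w2 hw2)
    by_contra hnd
    rw [Finset.not_disjoint_iff] at hnd
    obtain ⟨x, hx1, hx2⟩ := hnd
    rw [hψ] at hx1 hx2
    simp at hx1 hx2
    -- x is in both parts, so the parts coincide
    have hxp1 : x.val / 2 = (uf w1).val / 2 := by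
      rcases hx1 with rfl | rfl
      · rfl
      · exact hp1.symm
    have hxp2 : x.val / 2 = (uf w2).val / 2 := by
      rcases hx2 with rfl | rfl
      · rfl
      · exact hp2.symm
    have hpp : (uf w1).val / 2 = (uf w2).val / 2 := by omega
    -- the two pairs coincide (as unordered pairs)
    have hvals : ((uf w1).val = (uf w2).val ∧ (vf w1).val = (vf w2).val) ∨
        ((uf w1).val = (vf w2).val ∧ (vf w1).val = (uf w2).val) := by
      have e1 : (uf w1).val ≠ (vf w1).val := fun he => hne1 (Fin.ext he)
      have e2 : (uf w2).val ≠ (vf w2).val := fun he => hne2 (Fin.ext he)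
      omega
    rcases hvals with ⟨ha, hb⟩ | ⟨ha, hb⟩
    · have hau : uf w1 = uf w2 := Fin.ext ha
      have hbv : vf w1 = vf w2 := Fin.ext hb
      rw [hau, hbv] at hs1
      rw [hs1] at hs2
      simp only [List.cons.injEq, and_true, true_and] at hs2
      exact hne12 hs2
    · have hau : uf w1 = vf w2 := Fin.ext ha
      have hbv : vf w1 = uf w2 := Fin.ext hb
      have hrev : p (uf w2) (vf w2) = (p (vf w2) (uf w2)).reverse :=
        (hp (vf w2) (uf w2)).2.2
      rw [hrev, ← hau, ← hbv] at hs2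
      rw [SimpleGraph.Walk.support_reverse, hs1] at hs2
      simp only [List.reverse_cons, List.reverse_nil, List.nil_append, List.cons_append,
        List.cons.injEq, and_true, true_and] at hs2
      exact hne12 hs2
  have hbig : 2 * (n - m) ≤ m := by
    have hcard : (T.biUnion ψ).card = ∑ w ∈ T, (ψ w).card :=
      Finset.card_biUnion hdisj
    have hsum : ∑ w ∈ T, (ψ w).card = 2 * T.card := by
      rw [Finset.sum_congr rfl hψcard]
      simp [mul_comm]
    have hsub : T.biUnion ψ ⊆ S.toFinset := by
      intro x hx
      rw [Finset.mem_biUnion] at hx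
      obtain ⟨w, hw, hxw⟩ := hx
      exact hψsub w hw hxw
    have := Finset.card_le_card hsub
    rw [hcard, hsum, hTcard, hSf] at *
    omega
  have hmn : m ≤ n := by
    have := Finset.card_le_card (Finset.subset_univ S.toFinset)
    rw [hSf, Finset.card_univ, Fintype.card_fin] at this
    omega
  omega

lemma upper_card {n : ℕ} (hn : 3 ≤ n) :
    ({i : Fin n | i.val < n - n / 3} : Set (Fin n)).ncard = n - n / 3 := by
  have hle : n - n / 3 ≤ n := by omega
  have hrange : {i : Fin n | i.val < n - n / 3} = Set.range (Fin.castLE hle) := by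
    ext i
    simp only [Set.mem_setOf_eq, Set.mem_range]
    constructor
    · intro h
      exact ⟨⟨i.val, h⟩, Fin.ext rfl⟩
    · rintro ⟨j, rfl⟩
      exact j.2
  rw [hrange, ← Nat.card_coe_set_eq, Nat.card_range_of_injective (Fin.castLE_injective hle),
    Nat.card_eq_fintype_card, Fintype.card_fin]

end Stmt8Aux

theorem stmt8 (n : ℕ) (hn : 3 ≤ n) :
    sg (SimpleGraph.fromRel (fun i j : Fin n => i.val / 2 ≠ j.val / 2)) =
      n - n / 3 := by
  have hwit : (n - n / 3) ∈ {k | ∃ S : Set (Fin n), S.ncard = k ∧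
      IsStrongGeodeticSet (Stmt8Aux.GG n) S} :=
    ⟨{i : Fin n | i.val < n - n / 3}, Stmt8Aux.upper_card hn, Stmt8Aux.sgs_upper hn⟩
  apply le_antisymm
  · exact Nat.sInf_le hwit
  · apply le_csInf ⟨_, hwit⟩
    rintro m ⟨S, hS, hsgs⟩
    exact Stmt8Aux.sgs_lower hn S m hS hsgs
end

section
/- If S is a strong geodetic set of G □ H with a choice of shortest paths g̃, then the projection p_G(S) of S onto G is a geodetic set of G, i.e., every vertex of G lies on some shortest path between two vertices of p_G(S). -/
open SimpleGraph

/-! Distances in `G □ H` add over the coordinates, and the projections of a walk onto `G` and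
`H` have lengths adding up to its length; so the `G`-projection of a geodesic of `G □ H` is a
geodesic of `G`, and it passes through the first coordinate of every vertex of the geodesic. -/

namespace SimpleGraph

variable {α β : Type*} {G : SimpleGraph α} {H : SimpleGraph β}

lemma Reachable.dist_boxProd {x y : α × β} (h : (G □ H).Reachable x y) :
    (G □ H).dist x y = G.dist x.1 y.1 + H.dist x.2 y.2 := by
  obtain ⟨hG, hH⟩ := reachable_boxProd.mp h
  rw [dist, edist_boxProd, ENat.toNat_add (edist_ne_top_iff_reachable.mpr hG)
    (edist_ne_top_iff_reachable.mpr hH), dist, dist]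

namespace Walk

variable [DecidableEq β] [DecidableRel G.Adj]

lemma fst_mem_support_ofBoxProdLeft {x y z : α × β} (q : (G □ H).Walk x y)
    (hz : z ∈ q.support) : z.1 ∈ q.ofBoxProdLeft.support := by
  induction q with
  | nil => simp_all [ofBoxProdLeft]
  | @cons x w y h q ih =>
    rw [support_cons, List.mem_cons] at hz
    unfold ofBoxProdLeft Or.by_cases
    by_cases hG : G.Adj x.1 w.1 ∧ x.2 = w.2
    · rw [dif_pos hG, support_cons, List.mem_cons]
      exact hz.imp (congrArg Prod.fst) ih
    · obtain ⟨-, hx⟩ := h.resolve_left hG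
      rw [dif_neg hG]
      obtain ⟨a, b⟩ := x
      obtain ⟨a', b'⟩ := w
      obtain rfl : a = a' := hx
      rcases hz with rfl | hz
      · exact start_mem_support _
      · exact ih hz

lemma length_ofBoxProdLeft_eq_dist [DecidableEq α] [DecidableRel H.Adj] {x y : α × β}
    {q : (G □ H).Walk x y} (hq : q.length = (G □ H).dist x y) :
    q.ofBoxProdLeft.length = G.dist x.1 y.1 := by
  have hsplit := length_boxProd q
  have hfst := dist_le q.ofBoxProdLeft
  have hsnd := dist_le q.ofBoxProdRight
  rw [q.reachable.dist_boxProd] at hq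
  omega

end Walk

end SimpleGraph

theorem stmt12_general {V W : Type*}
    (G : SimpleGraph V) (H : SimpleGraph W) (hH : H.Connected)
    (S : Set (V × W)) (hS : IsStrongGeodeticSet (G □ H) S) :
    IsGeodeticSet G (Prod.fst '' S) := by
  classical
  obtain ⟨p, hp, hcover⟩ := hS
  intro a
  obtain ⟨b⟩ := hH.nonempty
  obtain ⟨u, hu, v, hv, hab⟩ := hcover (a, b)
  exact ⟨u.1, Set.mem_image_of_mem _ hu, v.1, Set.mem_image_of_mem _ hv, (p u v).ofBoxProdLeft,
    Walk.length_ofBoxProdLeft_eq_dist (hp u v).2.1, Walk.fst_mem_support_ofBoxProdLeft _ hab⟩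

theorem stmt12 {V W : Type*} [Fintype V] [Fintype W]
    (G : SimpleGraph V) (H : SimpleGraph W) (hG : G.Connected) (hH : H.Connected)
    (S : Set (V × W)) (hS : IsStrongGeodeticSet (G □ H) S) :
    IsGeodeticSet G (Prod.fst '' S) :=
  stmt12_general G H hH S hS
end
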